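/- For all integers T ≥ 1 and 1 ≤ k ≤ T, one has ‖π₀ P_{1/T} P_{2/T} ⋯ P_{k/T} − π_{k/T}‖_TV ≤ ‖π_{k/T} − π₀‖_TV + (k+1)²/(2T). -/

import Mathlib

open Matrix BigOperators

/-- A row-stochastic matrix: nonnegative entries, each row sums to 1. -/
def IsStochastic {n : ℕ} (P : Matrix (Fin n) (Fin n) ℝ) : Prop :=
  (∀ i j, 0 ≤ P i j) ∧ ∀ i, ∑ j, P i j = 1

/-- Irreducibility: every state can reach every other state. -/
def MCIrreducible {n : ℕ} (P : Matrix (Fin n) (Fin n) ℝ) : Prop :=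
  ∀ i j, ∃ m : ℕ, 0 < (P ^ m) i j

/-- Aperiodicity (for a finite chain): every state has eventually positive return
probabilities. -/
def MCAperiodic {n : ℕ} (P : Matrix (Fin n) (Fin n) ℝ) : Prop :=
  ∀ i : Fin n, ∃ N : ℕ, ∀ m : ℕ, N ≤ m → 0 < (P ^ m) i i

/-- A probability (row) vector. -/
def IsProbVec {n : ℕ} (v : Fin n → ℝ) : Prop :=
  (∀ i, 0 ≤ v i) ∧ ∑ i, v i = 1

/-- Total variation distance between two vectors. -/
noncomputable def tvDist {n : ℕ} (μ ν : Fin n → ℝ) : ℝ :=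
  (1 / 2) * ∑ i, |μ i - ν i|

/-- Euclidean norm on ℝⁿ. -/
noncomputable def euclNorm {n : ℕ} (v : Fin n → ℝ) : ℝ :=
  Real.sqrt (∑ i, (v i) ^ 2)

/-- Mixing time of `P` with stationary distribution `π`. -/
noncomputable def mixingTime {n : ℕ} (P : Matrix (Fin n) (Fin n) ℝ)
    (π : Fin n → ℝ) (ε : ℝ) : ℕ :=
  sInf {T : ℕ | ∀ ν : Fin n → ℝ, IsProbVec ν → tvDist (ν ᵥ* (P ^ T)) π ≤ ε}

/-- The interpolation `P_t = (1-t)·P₀ + t·P₁`. -/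
noncomputable def Pt {n : ℕ} (P₀ P₁ : Matrix (Fin n) (Fin n) ℝ) (t : ℝ) :
    Matrix (Fin n) (Fin n) ℝ :=
  (1 - t) • P₀ + t • P₁

/-- The ordered product `P_{(j+1)/T} P_{(j+2)/T} ⋯ P_{k/T}` (identity if `j ≥ k`). -/
noncomputable def prodSeg {n : ℕ} (P₀ P₁ : Matrix (Fin n) (Fin n) ℝ) (T j k : ℕ) :
    Matrix (Fin n) (Fin n) ℝ :=
  ((List.range (k - j)).map (fun i => Pt P₀ P₁ (((j : ℝ) + (i : ℝ) + 1) / (T : ℝ)))).prod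

/-- The ordered product `P_{1/T} P_{2/T} ⋯ P_{k/T}`. -/
noncomputable def adiabProd {n : ℕ} (P₀ P₁ : Matrix (Fin n) (Fin n) ℝ) (T k : ℕ) :
    Matrix (Fin n) (Fin n) ℝ :=
  prodSeg P₀ P₁ T 0 k

/-- Adiabatic time of the adiabatic evolution between `P₀` and `P₁`,
with `π₁` the stationary distribution of `P₁`. -/
noncomputable def adiabaticTime {n : ℕ} (P₀ P₁ : Matrix (Fin n) (Fin n) ℝ)
    (π₁ : Fin n → ℝ) (ε : ℝ) : ℕ :=
  sInf {T' : ℕ | ∀ T : ℕ, T' ≤ T → ∀ ν : Fin n → ℝ, IsProbVec ν →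
    tvDist ((ν ᵥ* P₀) ᵥ* adiabProd P₀ P₁ T T) π₁ ≤ ε}

/-- Stable adiabatic time, where `π s` is the stationary distribution of `P_s`. -/
noncomputable def stableAdiabaticTime {n : ℕ} (P₀ P₁ : Matrix (Fin n) (Fin n) ℝ)
    (π : ℝ → Fin n → ℝ) (ε : ℝ) : ℕ :=
  sInf {T : ℕ | ∀ k : ℕ, 1 ≤ k → k ≤ T →
    tvDist ((π 0) ᵥ* adiabProd P₀ P₁ T k) (π ((k : ℝ) / (T : ℝ))) < ε}

/-- `t_mix(ε) = sup_{s ∈ [0,1]} t_mix(P_s, ε)`, where `π s` is the stationary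
distribution of `P_s`. -/
noncomputable def maxMixingTime {n : ℕ} (P₀ P₁ : Matrix (Fin n) (Fin n) ℝ)
    (π : ℝ → Fin n → ℝ) (ε : ℝ) : ℕ :=
  sSup {m : ℕ | ∃ s ∈ Set.Icc (0 : ℝ) 1, m = mixingTime (Pt P₀ P₁ s) (π s) ε}

/-- `s` is a singular value of `A`: `s ≥ 0` and `s²` is an eigenvalue of `A Aᵀ`
(for a left eigenvector). -/
def IsSingularValue {n : ℕ} (A : Matrix (Fin n) (Fin n) ℝ) (s : ℝ) : Prop :=
  0 ≤ s ∧ ∃ v : Fin n → ℝ, v ≠ 0 ∧ v ᵥ* (A * Aᵀ) = (s ^ 2) • v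

/-- `σ` is the smallest nonzero (positive) singular value of `A`. -/
def IsSmallestPosSingularValue {n : ℕ} (A : Matrix (Fin n) (Fin n) ℝ) (σ : ℝ) : Prop :=
  0 < σ ∧ IsSingularValue A σ ∧ ∀ s : ℝ, 0 < s → IsSingularValue A s → σ ≤ s

/-!
Since `π_{k/T}` is stationary for `P_{k/T}` and `t ↦ P_t` is affine, one step of `P_{i/T}`
moves `π_{k/T}` by at most `|i - k| / T` in total variation. Stochastic matrices contract
total variation, so along the product `P_{1/T} ⋯ P_{k/T}` these errors simply add up, to
`∑_{i<k} (k - 1 - i) / T = k (k - 1) / (2T)`. Replacing the initial vector `π₀` by `π_{k/T}`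
costs `‖π_{k/T} − π₀‖_TV`, again by contraction.
-/

section Stochastic

variable {n : ℕ} {P₀ P₁ : Matrix (Fin n) (Fin n) ℝ}

lemma isStochastic_iff_mem_rowStochastic {P : Matrix (Fin n) (Fin n) ℝ} :
    IsStochastic P ↔ P ∈ rowStochastic ℝ (Fin n) :=
  mem_rowStochastic_iff_sum.symm

lemma Pt_div_mem_rowStochastic (hP₀ : P₀ ∈ rowStochastic ℝ (Fin n))
    (hP₁ : P₁ ∈ rowStochastic ℝ (Fin n)) {x : ℝ} {T : ℕ} (hx : 0 ≤ x) (hxT : x ≤ T) :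
    Pt P₀ P₁ (x / T) ∈ rowStochastic ℝ (Fin n) :=
  have h0 : 0 ≤ x / T := div_nonneg hx T.cast_nonneg
  have h1 : x / T ≤ 1 := div_le_one_of_le₀ hxT T.cast_nonneg
  convex_rowStochastic hP₀ hP₁ (sub_nonneg.2 h1) h0 (sub_add_cancel 1 _)

lemma prodSeg_eq_prod_map_range (P₀ P₁ : Matrix (Fin n) (Fin n) ℝ) (T j k : ℕ) :
    prodSeg P₀ P₁ T j k =
      ((List.range (k - j)).map fun i : ℕ => Pt P₀ P₁ (((j : ℝ) + i + 1) / T)).prod := by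
  simp only [prodSeg, List.pure_def, List.bind_eq_flatMap, ← List.map_eq_flatMap, List.map_map]
  rfl

lemma prodSeg_mem_rowStochastic (hP₀ : P₀ ∈ rowStochastic ℝ (Fin n))
    (hP₁ : P₁ ∈ rowStochastic ℝ (Fin n)) {T j k : ℕ} (hk : k ≤ T) :
    prodSeg P₀ P₁ T j k ∈ rowStochastic ℝ (Fin n) := by
  rw [prodSeg_eq_prod_map_range]
  refine Submonoid.list_prod_mem _ fun M hM => ?_
  obtain ⟨i, hi, rfl⟩ := List.mem_map.1 hM
  have hijk : j + i + 1 ≤ T := by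
    rw [List.mem_range] at hi
    omega
  exact Pt_div_mem_rowStochastic hP₀ hP₁ (by positivity) (by exact_mod_cast hijk)

lemma IsProbVec.vecMul {ρ : Fin n → ℝ} (hρ : IsProbVec ρ) {M : Matrix (Fin n) (Fin n) ℝ}
    (hM : M ∈ rowStochastic ℝ (Fin n)) : IsProbVec (ρ ᵥ* M) := by
  refine ⟨fun j => nonneg_vecMul_of_mem_rowStochastic hM hρ.1 j, ?_⟩
  have hsum : ρ ⬝ᵥ 1 = 1 := by simpa [dotProduct] using hρ.2
  simpa [dotProduct] using vecMul_dotProduct_one_eq_one_rowStochastic hM hsum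

end Stochastic

lemma sum_abs_vecMul_le {ι : Type*} [Fintype ι] [DecidableEq ι] {M : Matrix ι ι ℝ}
    (hM : M ∈ rowStochastic ℝ ι) (x : ι → ℝ) : ∑ j, |(x ᵥ* M) j| ≤ ∑ i, |x i| :=
  calc ∑ j, |(x ᵥ* M) j| ≤ ∑ j, ∑ i, |x i| * M i j := by
        refine Finset.sum_le_sum fun j _ => (Finset.abs_sum_le_sum_abs _ _).trans_eq ?_
        simp only [abs_mul, abs_of_nonneg (hM.1 _ _)]
    _ = ∑ i, |x i| := by
        rw [Finset.sum_comm]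
        simp only [← Finset.mul_sum, sum_row_of_mem_rowStochastic hM, mul_one]

section TotalVariation

variable {n : ℕ}

lemma tvDist_comm (μ ν : Fin n → ℝ) : tvDist μ ν = tvDist ν μ := by
  simp only [tvDist, abs_sub_comm]

lemma tvDist_triangle (μ ν ρ : Fin n → ℝ) : tvDist μ ρ ≤ tvDist μ ν + tvDist ν ρ := by
  simp only [tvDist, ← mul_add, ← Finset.sum_add_distrib]
  gcongr with i
  exact abs_sub_le _ _ _

lemma tvDist_le_one {μ ν : Fin n → ℝ} (hμ : IsProbVec μ) (hν : IsProbVec ν) :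
    tvDist μ ν ≤ 1 :=
  calc tvDist μ ν ≤ 1 / 2 * ∑ i, (μ i + ν i) := by
        unfold tvDist
        gcongr with i
        exact (abs_sub _ _).trans_eq (by rw [abs_of_nonneg (hμ.1 i), abs_of_nonneg (hν.1 i)])
    _ = 1 := by rw [Finset.sum_add_distrib, hμ.2, hν.2]; norm_num

lemma tvDist_vecMul_le {M : Matrix (Fin n) (Fin n) ℝ} (hM : M ∈ rowStochastic ℝ (Fin n))
    (μ ν : Fin n → ℝ) : tvDist (μ ᵥ* M) (ν ᵥ* M) ≤ tvDist μ ν := by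
  have h := sum_abs_vecMul_le hM (μ - ν)
  simp only [sub_vecMul, Pi.sub_apply] at h
  unfold tvDist
  gcongr

lemma tvDist_vecMul_Pt (P₀ P₁ : Matrix (Fin n) (Fin n) ℝ) (ρ : Fin n → ℝ) (t s : ℝ) :
    tvDist (ρ ᵥ* Pt P₀ P₁ t) (ρ ᵥ* Pt P₀ P₁ s) = |t - s| * tvDist (ρ ᵥ* P₁) (ρ ᵥ* P₀) := by
  have h : ∀ j, (ρ ᵥ* Pt P₀ P₁ t) j - (ρ ᵥ* Pt P₀ P₁ s) j
      = (t - s) * ((ρ ᵥ* P₁) j - (ρ ᵥ* P₀) j) := by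
    intro j
    simp only [Pt, vecMul_add, vecMul_smul, Pi.add_apply, Pi.smul_apply, smul_eq_mul]
    ring
  simp only [tvDist, h, abs_mul, ← Finset.mul_sum]
  ring

lemma tvDist_vecMul_Pt_le {P₀ P₁ : Matrix (Fin n) (Fin n) ℝ}
    (hP₀ : P₀ ∈ rowStochastic ℝ (Fin n)) (hP₁ : P₁ ∈ rowStochastic ℝ (Fin n))
    {ρ : Fin n → ℝ} (hρ : IsProbVec ρ) {s : ℝ} (hs : ρ ᵥ* Pt P₀ P₁ s = ρ) (t : ℝ) :
    tvDist (ρ ᵥ* Pt P₀ P₁ t) ρ ≤ |t - s| :=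
  calc tvDist (ρ ᵥ* Pt P₀ P₁ t) ρ = |t - s| * tvDist (ρ ᵥ* P₁) (ρ ᵥ* P₀) := by
        rw [← tvDist_vecMul_Pt, hs]
    _ ≤ |t - s| * 1 := by gcongr; exact tvDist_le_one (hρ.vecMul hP₁) (hρ.vecMul hP₀)
    _ = |t - s| := mul_one _

lemma tvDist_vecMul_list_prod_le {ι : Type*} (ρ : Fin n → ℝ) (M : ι → Matrix (Fin n) (Fin n) ℝ)
    (l : List ι) (hM : ∀ i ∈ l, M i ∈ rowStochastic ℝ (Fin n)) :
    tvDist (ρ ᵥ* (l.map M).prod) ρ ≤ (l.map fun i => tvDist (ρ ᵥ* M i) ρ).sum := by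
  induction l with
  | nil => simp [tvDist]
  | cons i l ih =>
    obtain ⟨-, hMl⟩ := List.forall_mem_cons.1 hM
    have hl : (l.map M).prod ∈ rowStochastic ℝ (Fin n) :=
      Submonoid.list_prod_mem _ (List.forall_mem_map.2 hMl)
    rw [List.map_cons, List.prod_cons, ← vecMul_vecMul, List.map_cons, List.sum_cons]
    calc tvDist ((ρ ᵥ* M i) ᵥ* (l.map M).prod) ρ
        ≤ tvDist ((ρ ᵥ* M i) ᵥ* (l.map M).prod) (ρ ᵥ* (l.map M).prod)
          + tvDist (ρ ᵥ* (l.map M).prod) ρ := tvDist_triangle _ _ _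
      _ ≤ _ := add_le_add (tvDist_vecMul_le hl _ _) (ih hMl)

end TotalVariation

lemma sum_range_abs_add_one_sub (k : ℕ) :
    ∑ i ∈ Finset.range k, |(i : ℝ) + 1 - k| = k * (k - 1) / 2 := by
  have gauss : ∑ i ∈ Finset.range k, (i : ℝ) = k * (k - 1) / 2 := by
    induction k with
    | zero => simp
    | succ k ih => rw [Finset.sum_range_succ, ih]; push_cast; ring
  rw [← Finset.sum_range_reflect, ← gauss]
  refine Finset.sum_congr rfl fun i hi => ?_
  rw [Finset.mem_range] at hi
  rw [Nat.cast_sub (by omega), Nat.cast_sub (by omega), Nat.cast_one,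
    abs_of_nonpos (by linarith [i.cast_nonneg (α := ℝ)])]
  ring

lemma tvDist_vecMul_adiabProd_le {n : ℕ} {P₀ P₁ : Matrix (Fin n) (Fin n) ℝ}
    (hP₀ : P₀ ∈ rowStochastic ℝ (Fin n)) (hP₁ : P₁ ∈ rowStochastic ℝ (Fin n))
    {T k : ℕ} (hk : k ≤ T) {ρ : Fin n → ℝ} (hρ : IsProbVec ρ)
    (hstat : ρ ᵥ* Pt P₀ P₁ ((k : ℝ) / T) = ρ) :
    tvDist (ρ ᵥ* adiabProd P₀ P₁ T k) ρ ≤ k * (k - 1) / (2 * T) := by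
  rw [adiabProd, prodSeg_eq_prod_map_range, Nat.sub_zero]
  simp only [Nat.cast_zero, zero_add]
  have hfactor : ∀ i ∈ List.range k, Pt P₀ P₁ (((i : ℝ) + 1) / T) ∈ rowStochastic ℝ (Fin n) :=
    fun i hi => Pt_div_mem_rowStochastic hP₀ hP₁ (by positivity)
      (by exact_mod_cast (List.mem_range.1 hi).trans_le hk)
  calc tvDist (ρ ᵥ* ((List.range k).map fun i : ℕ => Pt P₀ P₁ (((i : ℝ) + 1) / T)).prod) ρ
      ≤ ((List.range k).map fun i : ℕ => tvDist (ρ ᵥ* Pt P₀ P₁ (((i : ℝ) + 1) / T)) ρ).sum :=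
        tvDist_vecMul_list_prod_le ρ _ _ hfactor
    _ ≤ ((List.range k).map fun i : ℕ => |((i : ℝ) + 1) / T - k / T|).sum :=
        List.sum_le_sum fun i _ => tvDist_vecMul_Pt_le hP₀ hP₁ hρ hstat _
    _ = (∑ i ∈ Finset.range k, |(i : ℝ) + 1 - k|) / T := by
        rw [Finset.sum_div, Finset.sum_eq_multiset_sum, Finset.range_val, Multiset.range,
          Multiset.map_coe, Multiset.sum_coe]
        simp only [← sub_div, abs_div, Nat.abs_cast]
    _ = k * (k - 1) / (2 * T) := by rw [sum_range_abs_add_one_sub, div_div]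

theorem stmt_6_general {n : ℕ} (P₀ P₁ : Matrix (Fin n) (Fin n) ℝ)
    (hP₀ : IsStochastic P₀)
    (hP₁ : IsStochastic P₁)
    (π : ℝ → Fin n → ℝ)
    (hπ : ∀ t ∈ Set.Icc (0 : ℝ) 1, IsProbVec (π t) ∧ (π t) ᵥ* (Pt P₀ P₁ t) = π t)
    (T k : ℕ) (hk2 : k ≤ T) :
    tvDist ((π 0) ᵥ* adiabProd P₀ P₁ T k) (π ((k : ℝ) / (T : ℝ)))
      ≤ tvDist (π ((k : ℝ) / (T : ℝ))) (π 0) + ((k : ℝ) + 1) ^ 2 / (2 * (T : ℝ)) := by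
  rw [isStochastic_iff_mem_rowStochastic] at hP₀ hP₁
  have hA : adiabProd P₀ P₁ T k ∈ rowStochastic ℝ (Fin n) := prodSeg_mem_rowStochastic hP₀ hP₁ hk2
  obtain ⟨hρ, hstat⟩ := hπ (k / T)
    ⟨by positivity, div_le_one_of_le₀ (by exact_mod_cast hk2) T.cast_nonneg⟩
  set ρ := π ((k : ℝ) / T)
  calc tvDist (π 0 ᵥ* adiabProd P₀ P₁ T k) ρ
      ≤ tvDist (π 0 ᵥ* adiabProd P₀ P₁ T k) (ρ ᵥ* adiabProd P₀ P₁ T k)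
        + tvDist (ρ ᵥ* adiabProd P₀ P₁ T k) ρ := tvDist_triangle _ _ _
    _ ≤ tvDist (π 0) ρ + k * (k - 1) / (2 * T) :=
        add_le_add (tvDist_vecMul_le hA _ _) (tvDist_vecMul_adiabProd_le hP₀ hP₁ hk2 hρ hstat)
    _ ≤ tvDist ρ (π 0) + ((k : ℝ) + 1) ^ 2 / (2 * T) := by
        rw [tvDist_comm]
        gcongr
        nlinarith

/-- For all integers T ≥ 1 and 1 ≤ k ≤ T,
`‖π₀ P_{1/T} ⋯ P_{k/T} − π_{k/T}‖_TV ≤ ‖π_{k/T} − π₀‖_TV + (k+1)²/(2T)`. -/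
theorem stmt_6 {n : ℕ} (hn : 1 ≤ n) (P₀ P₁ : Matrix (Fin n) (Fin n) ℝ)
    (hP₀ : IsStochastic P₀) (hP₀i : MCIrreducible P₀) (hP₀a : MCAperiodic P₀)
    (hP₁ : IsStochastic P₁) (hP₁i : MCIrreducible P₁) (hP₁a : MCAperiodic P₁)
    (π : ℝ → Fin n → ℝ)
    (hπ : ∀ t ∈ Set.Icc (0 : ℝ) 1, IsProbVec (π t) ∧ (π t) ᵥ* (Pt P₀ P₁ t) = π t)
    (T k : ℕ) (hT : 1 ≤ T) (hk1 : 1 ≤ k) (hk2 : k ≤ T) :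
    tvDist ((π 0) ᵥ* adiabProd P₀ P₁ T k) (π ((k : ℝ) / (T : ℝ)))
      ≤ tvDist (π ((k : ℝ) / (T : ℝ))) (π 0) + ((k : ℝ) + 1) ^ 2 / (2 * (T : ℝ)) :=
  stmt_6_general P₀ P₁ hP₀ hP₁ π hπ T k hk2
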